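/- arXiv:0809.3063 — 2 statements merged into one kernel-verified Lean document; each statement's English description precedes it below -/
import Mathlib

section
/- Let H(t) = 1 + r_1 t + r_2 t² + ⋯ ∈ ℂ[[t]] be 2-algebraically rigid and set d = h_2 − 3r_1², where h_2 = [H³]_2. If d ≠ 0, then H = D_{s,r_1} for any square root s ∈ ℂ of d. If d = 0, then H(t) = 1 + r_1 t = D_{0,r_1}(t). -/
noncomputable section

namespace RigidGenus

variable {R : Type*} [Field R]

/-- Termwise substitution `t ↦ w·t` on Laurent series: the coefficient of `t^k`
is multiplied by `w^k`. -/
def zscale (w : R) (f : LaurentSeries R) : LaurentSeries R where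
  coeff k := w ^ k * f.coeff k
  isPWO_support' := f.isPWO_support'.mono (fun k hk => by
    simp only [Function.mem_support, ne_eq] at hk ⊢
    exact fun h => hk (by rw [h, mul_zero]))

/-- Termwise derivative of a Laurent series: `(∑ f_k t^k)' = ∑ k f_k t^(k-1)`. -/
def lderiv (f : LaurentSeries R) : LaurentSeries R where
  coeff k := ((k + 1 : ℤ) : R) * f.coeff (k + 1)
  isPWO_support' := by
    have himg : ((fun k : ℤ => k - 1) '' (Function.support f.coeff)).IsPWO :=
      f.isPWO_support'.image_of_monotone (fun a b h => sub_le_sub_right h 1)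
    refine himg.mono (fun k hk => ?_)
    simp only [Function.mem_support, ne_eq] at hk
    exact ⟨k + 1, fun h => hk (by rw [h, mul_zero]), by ring⟩

/-- `F_H = H(t)/t`, as a formal Laurent series. -/
def FH (H : PowerSeries R) : LaurentSeries R :=
  HahnSeries.single (-1 : ℤ) (1 : R) * HahnSeries.ofPowerSeries ℤ R H

/-- `S_H(w_0,…,w_n;t) = ∑_i ∏_{j ≠ i} F_H((w_j - w_i) t)`. -/
def SH (H : PowerSeries R) {n : ℕ} (w : Fin (n + 1) → ℤ) : LaurentSeries R :=
  ∑ i : Fin (n + 1), ∏ j ∈ Finset.univ.erase i, zscale ((w j - w i : ℤ) : R) (FH H)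

/-- `H` is `n`-algebraically rigid: for all `1 ≤ m ≤ n` and pairwise distinct
integers `w_0, …, w_m`, the Laurent series `S_H(w_0,…,w_m;t)` is constant. -/
def AlgRigid (H : PowerSeries R) (n : ℕ) : Prop :=
  ∀ m : ℕ, 1 ≤ m → m ≤ n → ∀ w : Fin (m + 1) → ℤ, Function.Injective w →
    ∀ k : ℤ, k ≠ 0 → (SH H w).coeff k = 0

/-- The formal exponential series `exp (a t)`. -/
def expS (a : R) : PowerSeries R := PowerSeries.mk fun n => a ^ n / n.factorial

/-- The formal sine series `sin (a t)`. -/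
def sinS (a : R) : PowerSeries R :=
  PowerSeries.mk fun n => if n % 2 = 1 then (-1 : R) ^ (n / 2) * a ^ n / n.factorial else 0

/-- The formal cosine series `cos (a t)`. -/
def cosS (a : R) : PowerSeries R :=
  PowerSeries.mk fun n => if n % 2 = 0 then (-1 : R) ^ (n / 2) * a ^ n / n.factorial else 0

/-- `H = D_{a,b}`, the generalized Todd series `t(a·coth(at)+b)`: for `a ≠ 0` it is
characterized by `D_{a,b}(t)·(e^{at} - e^{-at}) = t·(a(e^{at}+e^{-at}) + b(e^{at}-e^{-at}))`,
and `D_{0,b}(t) = 1 + bt`. -/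
def IsDab (a b : R) (H : PowerSeries R) : Prop :=
  (a ≠ 0 ∧ H * (expS a - expS (-a)) =
      PowerSeries.X * (PowerSeries.C a * (expS a + expS (-a)) +
        PowerSeries.C b * (expS a - expS (-a)))) ∨
  (a = 0 ∧ H = 1 + PowerSeries.C b * PowerSeries.X)

/-- `H = G_{a,b}`, the series `t(a·cot(at)+b)`: for `a ≠ 0` it is characterized by
`G_{a,b}(t)·sin(at) = t·(a·cos(at) + b·sin(at))`, and `G_{0,b}(t) = 1 + bt`. -/
def IsGab (a b : R) (H : PowerSeries R) : Prop :=
  (a ≠ 0 ∧ H * sinS a =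
      PowerSeries.X * (PowerSeries.C a * cosS a + PowerSeries.C b * sinS a)) ∨
  (a = 0 ∧ H = 1 + PowerSeries.C b * PowerSeries.X)

/-
Rigidity at the two points `0, 1` says that `H(t) - H(-t)` is a multiple of `t`, so
`G = H - r₁t` is even. Rigidity at `0, 1, 2` then turns into the duplication equation
`G(t) (G(2t) - G(t)) = d t²`. Comparing lowest-order terms of two solutions shows that it has at
most one solution with `G(0) = 1`: for `d = s² ≠ 0` this is `st coth(st)`, by
`2 coth 2x = coth x + tanh x`, and for `d = 0` it is `1`.
-/

open PowerSeries

local notation "ofPS" => HahnSeries.ofPowerSeries ℤ R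

lemma coeff_single_mul_ofPowerSeries (b : ℤ) (c : R) (Q : R⟦X⟧) (n : ℕ) :
    (HahnSeries.single b c * ofPS Q).coeff (n + b) = c * coeff n Q := by
  rw [HahnSeries.coeff_single_mul_add, HahnSeries.ofPowerSeries_apply_coeff]

lemma single_mul_ofPowerSeries_mul (b b' : ℤ) (c c' : R) (A B : R⟦X⟧) :
    HahnSeries.single b c * ofPS A * (HahnSeries.single b' c' * ofPS B) =
      HahnSeries.single (b + b') (c * c') * ofPS (A * B) := by
  rw [mul_mul_mul_comm, HahnSeries.single_mul_single, ← map_mul]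

lemma zscale_FH {a : R} (ha : a ≠ 0) (H : R⟦X⟧) :
    zscale a (FH H) = HahnSeries.single (-1 : ℤ) a⁻¹ * ofPS (rescale a H) := by
  ext k
  have hk : k = k + 1 + -1 := by ring
  change a ^ k * _ = _
  rw [FH, hk, HahnSeries.coeff_single_mul_add, HahnSeries.coeff_single_mul_add,
    PowerSeries.coeff_coe, PowerSeries.coeff_coe]
  split_ifs with h
  · simp
  · rw [coeff_rescale, ← zpow_natCast, Int.natAbs_of_nonneg (by omega), ← hk,
      zpow_add_one₀ ha]
    field_simp

lemma coeff_SH_zero_one (H : R⟦X⟧) (n : ℕ) :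
    (SH H ![0, 1]).coeff (n + -1) = coeff n (H - rescale (-1) H) := by
  rw [SH, Fin.sum_univ_two,
    show Finset.univ.erase (0 : Fin 2) = {1} by decide,
    show Finset.univ.erase (1 : Fin 2) = {0} by decide,
    Finset.prod_singleton, Finset.prod_singleton]
  norm_num [zscale_FH, coeff_single_mul_ofPowerSeries]
  ring

lemma coeff_SH_zero_one_two [CharZero R] (H : R⟦X⟧) (n : ℕ) :
    (SH H ![0, 1, 2]).coeff (n + -2) = 2⁻¹ * coeff n
      (H * rescale 2 H - 2 * (rescale (-1) H * H) + rescale (-2) H * rescale (-1) H) := by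
  rw [SH, Fin.sum_univ_three,
    show Finset.univ.erase (0 : Fin 3) = {1, 2} by decide,
    show Finset.univ.erase (1 : Fin 3) = {0, 2} by decide,
    show Finset.univ.erase (2 : Fin 3) = {0, 1} by decide,
    Finset.prod_pair (by decide), Finset.prod_pair (by decide), Finset.prod_pair (by decide)]
  have h2 : (![0, 1, 2] : Fin 3 → ℤ) 2 = 2 := rfl
  norm_num [h2, zscale_FH, single_mul_ofPowerSeries_mul, coeff_single_mul_ofPowerSeries]
  simp only [← map_mul, coeff_single_mul_ofPowerSeries]
  rw [← map_ofNat C 2, coeff_C_mul]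
  ring

lemma rescale_C (a r : R) : rescale a (C r) = C r := by
  ext n
  rw [coeff_rescale, coeff_C]
  split_ifs with h <;> simp [h]

lemma constantCoeff_rescale (a : R) (f : R⟦X⟧) :
    constantCoeff (rescale a f) = constantCoeff f := by
  rw [← coeff_zero_eq_constantCoeff_apply, coeff_rescale, pow_zero, one_mul,
    coeff_zero_eq_constantCoeff_apply]

lemma eq_C_mul_X_pow_of_coeff_ne {Q : R⟦X⟧} {m : ℕ} (h : ∀ n ≠ m, coeff n Q = 0) :
    Q = C (coeff m Q) * X ^ m := by
  ext n
  rw [coeff_C_mul_X_pow]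
  split_ifs with hn
  · rw [hn]
  · exact h n hn

lemma AlgRigid.rescale_neg_one {H : R⟦X⟧} {n : ℕ} (h : AlgRigid H n) (hn : 1 ≤ n) :
    rescale (-1) H = H - C (2 * coeff 1 H) * X := by
  have hmono := eq_C_mul_X_pow_of_coeff_ne (Q := H - rescale (-1) H) (m := 1) fun k hk => by
    rw [← coeff_SH_zero_one]
    exact h 1 le_rfl hn _ (by decide) _ (by omega)
  rw [pow_one, map_sub, coeff_rescale] at hmono
  rw [show 2 * coeff 1 H = coeff 1 H - (-1) ^ 1 * coeff 1 H by ring, ← hmono]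
  ring

lemma AlgRigid.coeff_duplication [CharZero R] {H : R⟦X⟧} {n : ℕ} (h : AlgRigid H n)
    (hn : 2 ≤ n) {k : ℕ} (hk : k ≠ 2) : coeff k
      (H * rescale 2 H - 2 * (rescale (-1) H * H) + rescale (-2) H * rescale (-1) H) = 0 := by
  have := h 2 one_le_two hn ![0, 1, 2] (by decide) (k + -2) (by omega)
  rwa [coeff_SH_zero_one_two, mul_eq_zero, or_iff_right (by norm_num)] at this

section Duplication

def dupDefect (G : R⟦X⟧) : R⟦X⟧ := G * (rescale 2 G - G)

lemma dupDefect_one : dupDefect (1 : R⟦X⟧) = 0 := by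
  simp [dupDefect]

lemma coeff_two_dupDefect (G : R⟦X⟧) :
    coeff 2 (dupDefect G) = 3 * constantCoeff G * coeff 2 G + coeff 1 G ^ 2 := by
  simp [dupDefect, coeff_mul, Finset.Nat.antidiagonal_succ, coeff_rescale]
  ring

variable [CharZero R]

lemma eq_of_dupDefect_eq {G₁ G₂ : R⟦X⟧} (h₁ : constantCoeff G₁ = 1)
    (h₂ : constantCoeff G₂ = 1) (h : dupDefect G₁ = dupDefect G₂) : G₁ = G₂ := by
  -- With `G₁ - G₂ = X ^ N * D₀`, the coefficient of `X ^ N` in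
  -- `dupDefect G₁ - dupDefect G₂` is `(2 ^ N - 1) * D₀(0)`, which forces `N = 0`;
  -- but `G₁ - G₂` has no constant term.
  by_contra hne
  set D := G₁ - G₂
  set N := D.order.toNat
  have hD0 : constantCoeff D.divXPowOrder ≠ 0 := by
    rwa [Ne, constantCoeff_divXPowOrder_eq_zero_iff, sub_eq_zero]
  have hD : D = X ^ N * D.divXPowOrder := X_pow_order_mul_divXPowOrder.symm
  obtain ⟨E, hE⟩ : X ∣ rescale 2 G₁ - G₁ := by
    rw [X_dvd_iff, map_sub, constantCoeff_rescale, sub_self]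
  have hsplit : X ^ N * (D.divXPowOrder * (X * E) +
      G₂ * (C (2 ^ N) * rescale 2 D.divXPowOrder - D.divXPowOrder)) = 0 := by
    have : dupDefect G₁ - dupDefect G₂ =
        D * (rescale 2 G₁ - G₁) + G₂ * (rescale 2 D - D) := by
      simp only [dupDefect, D, map_sub]; ring
    rw [h, sub_self, hE, hD, map_mul, map_pow, rescale_X, mul_pow, ← map_pow] at this
    linear_combination -this
  have hc := congrArg constantCoeff ((mul_eq_zero.mp hsplit).resolve_left (pow_ne_zero _ X_ne_zero))
  simp only [map_add, map_mul, map_sub, constantCoeff_X, h₂, constantCoeff_C,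
    constantCoeff_rescale, map_zero] at hc
  have hN : N = 0 := by
    have h2N : ((2 : R) ^ N - 1) * constantCoeff D.divXPowOrder = 0 := by linear_combination hc
    have h2N : ((2 ^ N : ℕ) : R) = 1 := by
      push_cast
      exact sub_eq_zero.mp ((mul_eq_zero.mp h2N).resolve_right hD0)
    exact (Nat.pow_eq_one.mp (Nat.cast_eq_one.mp h2N)).resolve_left (by norm_num)
  apply hD0
  rw [constantCoeff_divXPowOrder]
  change coeff N D = 0
  rw [hN]
  simp [D, h₁, h₂]

end Duplication

lemma AlgRigid.dupDefect_eq [CharZero R] {H : R⟦X⟧} {n : ℕ} (h : AlgRigid H n) (hn : 2 ≤ n)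
    (hH : constantCoeff H = 1) :
    dupDefect (H - C (coeff 1 H) * X) = C (3 * coeff 2 H) * X ^ 2 := by
  have hodd := h.rescale_neg_one (by omega)
  set r := coeff 1 H with hr
  set G := H - C r * X
  have hG : rescale (-1) G = G := by
    rw [map_sub, hodd, map_mul, map_mul, rescale_C, rescale_X, map_ofNat]
    simp only [G, map_neg, map_one]
    ring
  have hcomb : H * rescale 2 H - 2 * (rescale (-1) H * H) + rescale (-2) H * rescale (-1) H =
      2 * dupDefect G + C (6 * r ^ 2) * X ^ 2 := by
    have hH' : H = G + C r * X := by ring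
    rw [show (-2 : R) = -1 * 2 by norm_num, ← rescale_rescale, hH', map_add, map_add, hG]
    simp only [dupDefect, map_add, map_mul, rescale_C, rescale_X, map_pow, map_neg, map_one,
      map_ofNat]
    ring
  rw [eq_C_mul_X_pow_of_coeff_ne (Q := dupDefect G) (m := 2) fun k hk => ?_, coeff_two_dupDefect]
  · simp [G, hH, hr]
  · have := h.coeff_duplication hn hk
    rw [hcomb, map_add, coeff_C_mul_X_pow, if_neg hk, add_zero, ← map_ofNat C 2,
      coeff_C_mul] at this
    simpa using this

section Coth

lemma constantCoeff_expS (a : R) : constantCoeff (expS a) = 1 := by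
  simp [expS, ← coeff_zero_eq_constantCoeff_apply]

lemma coeff_one_expS (a : R) : coeff 1 (expS a) = a := by
  simp [expS]

def twoSinh (s : R) : R⟦X⟧ := expS s - expS (-s)

def twoCosh (s : R) : R⟦X⟧ := expS s + expS (-s)

lemma constantCoeff_twoSinh (s : R) : constantCoeff (twoSinh s) = 0 := by
  rw [twoSinh, map_sub, constantCoeff_expS, constantCoeff_expS, sub_self]

lemma coeff_one_twoSinh (s : R) : coeff 1 (twoSinh s) = 2 * s := by
  rw [twoSinh, map_sub, coeff_one_expS, coeff_one_expS]
  ring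

/-- `st coth(st)`, where the `mk` is `twoSinh s / X`; its inverse is junk for `s = 0`. -/
def xCoth (s : R) : R⟦X⟧ := C s * twoCosh s * (mk fun n => coeff (n + 1) (twoSinh s))⁻¹

variable [CharZero R]

lemma expS_eq_rescale_exp (a : R) : expS a = rescale a (exp R) := by
  ext n
  simp [expS, coeff_rescale, coeff_exp, div_eq_mul_inv]

lemma expS_mul_expS (a b : R) : expS a * expS b = expS (a + b) := by
  simp only [expS_eq_rescale_exp, exp_mul_exp_eq_exp_add]

lemma rescale_expS (c a : R) : rescale c (expS a) = expS (a * c) := by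
  rw [expS_eq_rescale_exp, expS_eq_rescale_exp, rescale_rescale]

lemma xCoth_mul_twoSinh {s : R} (hs : s ≠ 0) : xCoth s * twoSinh s = C s * X * twoCosh s := by
  have hSV := sub_const_eq_X_mul_shift (twoSinh s)
  rw [constantCoeff_twoSinh, map_zero, sub_zero] at hSV
  rw [xCoth]
  set V : R⟦X⟧ := mk fun n => coeff (n + 1) (twoSinh s)
  have hV : V⁻¹ * V = 1 :=
    PowerSeries.inv_mul_cancel _ (by simp [V, coeff_one_twoSinh, hs])
  rw [hSV]
  linear_combination C s * X * twoCosh s * hV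

lemma constantCoeff_xCoth {s : R} (hs : s ≠ 0) : constantCoeff (xCoth s) = 1 := by
  simp only [xCoth, twoCosh, map_mul, constantCoeff_C, map_add, constantCoeff_expS,
    constantCoeff_inv, constantCoeff_mk, zero_add, coeff_one_twoSinh, mul_inv_rev]
  field_simp
  ring

lemma dupDefect_xCoth {s : R} (hs : s ≠ 0) : dupDefect (xCoth s) = C (s ^ 2) * X ^ 2 := by
  set S := twoSinh s
  have hS : S ≠ 0 := fun h => by simpa [hs, S, coeff_one_twoSinh] using congrArg (coeff 1) h
  have hS₂ : rescale 2 S ≠ 0 := fun h => by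
    simpa [hs, S, coeff_rescale, coeff_one_twoSinh] using congrArg (coeff 1) h
  have hdouble : twoCosh s * (2 * rescale 2 (twoCosh s) * S - twoCosh s * rescale 2 S) =
      S * S * rescale 2 S := by
    have hsq (a : R) : expS (a * 2) = expS a * expS a := by rw [expS_mul_expS, mul_two]
    simp only [S, twoSinh, twoCosh, map_add, map_sub, rescale_expS, hsq]
    ring
  have h₂ : rescale 2 (xCoth s) * rescale 2 S = C s * (C 2 * X) * rescale 2 (twoCosh s) := by
    rw [← map_mul, xCoth_mul_twoSinh hs, map_mul, map_mul, rescale_X, rescale_C]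
  refine mul_right_cancel₀ (mul_ne_zero (mul_ne_zero hS hS) hS₂) ?_
  calc dupDefect (xCoth s) * (S * S * rescale 2 S)
      = (xCoth s * S) * ((rescale 2 (xCoth s) * rescale 2 S) * S)
        - (xCoth s * S) * ((xCoth s * S) * rescale 2 S) := by rw [dupDefect]; ring
    _ = C (s ^ 2) * X ^ 2 * (S * S * rescale 2 S) := by
      rw [xCoth_mul_twoSinh hs, h₂, ← hdouble, map_pow, ← map_ofNat C 2]
      ring

end Coth

/-- let `H = 1 + r₁t + ⋯ ∈ ℂ[[t]]` be 2-algebraically rigid and `d = h₂ − 3r₁²`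
with `h₂ = [H³]₂`. If `d ≠ 0` then `H = D_{s,r₁}` for any square root `s` of `d`;
if `d = 0` then `H = 1 + r₁t = D_{0,r₁}`. -/
theorem algRigid_two_eq_Dab (H : PowerSeries ℂ) (hH : PowerSeries.constantCoeff H = 1)
    (hrig : AlgRigid H 2) (r₁ d : ℂ)
    (hr₁ : PowerSeries.coeff 1 H = r₁)
    (hd : d = PowerSeries.coeff 2 (H ^ 3) - 3 * r₁ ^ 2) :
    (d ≠ 0 → ∀ s : ℂ, s ^ 2 = d → IsDab s r₁ H) ∧
    (d = 0 → H = 1 + PowerSeries.C r₁ * PowerSeries.X) := by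
  have hcube : coeff 2 (H ^ 3) = 3 * coeff 2 H + 3 * r₁ ^ 2 := by
    simp [pow_succ, coeff_mul, Finset.Nat.antidiagonal_succ, hH, hr₁]
    ring
  have hdup : dupDefect (H - C r₁ * X) = C d * X ^ 2 := by
    rw [← hr₁, hrig.dupDefect_eq le_rfl hH, hd, hcube]
    ring_nf
  have hG0 : constantCoeff (H - C r₁ * X) = 1 := by simp [hH]
  refine ⟨fun hd0 s hs => ?_, fun hd0 => ?_⟩
  · have hs0 : s ≠ 0 := by
      rintro rfl
      exact hd0 (by rw [← hs]; ring)
    have hG := eq_of_dupDefect_eq hG0 (constantCoeff_xCoth hs0)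
      (by rw [hdup, dupDefect_xCoth hs0, hs])
    refine Or.inl ⟨hs0, ?_⟩
    have := xCoth_mul_twoSinh hs0
    rw [← hG, twoSinh, twoCosh] at this
    linear_combination this
  · have hG := eq_of_dupDefect_eq hG0 (map_one _)
      (by rw [hdup, dupDefect_one, hd0, map_zero, zero_mul])
    linear_combination hG

end RigidGenus
end
end

section
/- Let H(t) ∈ ℂ[[t]] be a formal power series with constant term 1. If H is 2-algebraically rigid, then H is strongly algebraically rigid: for every n ≥ 1 and all pairwise distinct integers w_0, …, w_n, the series S_H(w_0,…,w_n;t) is constant. In other words, AR² = AR³ = ⋯ = AR^∞. -/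
noncomputable section

namespace RigidGenus

variable {R : Type*} [Field R]

/-!
Put `g i j = F_H((w_j - w_i) t) - r₁`, the rescaled series with its constant term removed.
`AR¹` says that `g` is antisymmetric, and `AR²` then says that every cyclic sum
`g i j * g j k + g j k * g k i + g k i * g i j` is constant; its `t⁰`-coefficient is `-3 r₂` for
every triple, because `F_H` starts with `t⁻¹`. For an antisymmetric `g` whose cyclic sums all equal
`e`, the sum `∑_{i ∈ T} ∏_{j ∈ T \ {i}} g i j` depends only on `|T|` (two-step recursion in `|T|`),
so expanding `S_H = ∑_i ∏_{j ≠ i} (g i j + r₁)` over subsets `T` writes it as a polynomial in `r₁`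
and `r₂`.
-/

open HahnSeries Finset

section SumProdErase

variable {K ι : Type*} [CommRing K] [DecidableEq ι]

def sumProdErase (g : ι → ι → K) (s : Finset ι) : K :=
  ∑ i ∈ s, ∏ j ∈ s.erase i, g i j

def oddPowOrZero (e : K) (n : ℕ) : K :=
  if Odd n then (-e) ^ (n / 2) else 0

lemma oddPowOrZero_add_two (e : K) (n : ℕ) :
    oddPowOrZero e (n + 2) = -(e * oddPowOrZero e n) := by
  simp only [oddPowOrZero, Nat.odd_add_one, not_not, Nat.add_div_right n two_pos]
  split_ifs <;> ring

variable {g : ι → ι → K} {e : K}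

lemma sumProdErase_insert {p : ι} {B : Finset ι} (hp : p ∉ B) :
    sumProdErase g (insert p B) =
      ∏ j ∈ B, g p j + ∑ i ∈ B, g i p * ∏ j ∈ B.erase i, g i j := by
  rw [sumProdErase, sum_insert hp, erase_insert hp]
  congr 1
  refine sum_congr rfl fun i hi => ?_
  have hip : i ≠ p := ne_of_mem_of_not_mem hi hp
  rw [erase_insert_of_ne hip.symm, prod_insert fun h => hp (mem_of_mem_erase h)]

lemma prod_eq_sumProdErase_insert_add (hanti : ∀ i j, i ≠ j → g j i = -g i j) {p : ι}
    {B : Finset ι} (hp : p ∉ B) :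
    ∏ j ∈ B, g p j = sumProdErase g (insert p B) + ∑ j ∈ B, g p j * ∏ k ∈ B.erase j, g j k := by
  rw [sumProdErase_insert hp, add_assoc, ← sum_add_distrib, left_eq_add]
  refine sum_eq_zero fun i hi => ?_
  rw [hanti i p (ne_of_mem_of_not_mem hi hp)]
  ring

lemma sumProdErase_insert_insert (hanti : ∀ i j, i ≠ j → g j i = -g i j)
    (hcyc : ∀ i j k, i ≠ j → j ≠ k → i ≠ k → g i j * g j k + g j k * g k i + g k i * g i j = e)
    {p c : ι} {B : Finset ι} (hpc : p ≠ c) (hp : p ∉ B) (hc : c ∉ B) :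
    sumProdErase g (insert p (insert c B)) =
      (sumProdErase g (insert p B) - sumProdErase g (insert c B)) * g p c -
        e * sumProdErase g B := by
  have hpcB : p ∉ insert c B := by simp [hp, hpc]
  have hp_expand := prod_eq_sumProdErase_insert_add hanti hpcB
  rw [prod_insert hc, sum_insert hc, erase_insert hc,
    prod_eq_sumProdErase_insert_add hanti hp] at hp_expand
  have hc_expand := prod_eq_sumProdErase_insert_add hanti hc
  -- the cyclic identity for `(p, j, c)` rewrites each summand over `j ∈ B`
  have hsum : ∑ j ∈ B, g p j * ∏ k ∈ (insert c B).erase j, g j k =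
      g p c * ∑ j ∈ B, g p j * ∏ k ∈ B.erase j, g j k -
        g p c * ∑ j ∈ B, g c j * ∏ k ∈ B.erase j, g j k + e * sumProdErase g B := by
    rw [sumProdErase, mul_sum, mul_sum, mul_sum, ← sum_sub_distrib, ← sum_add_distrib]
    refine sum_congr rfl fun j hj => ?_
    have hcj : c ≠ j := ne_of_mem_of_not_mem hj hc |>.symm
    rw [erase_insert_of_ne hcj, prod_insert fun h => hc (mem_of_mem_erase h)]
    linear_combination (∏ k ∈ B.erase j, g j k) *
      (hcyc p j c (ne_of_mem_of_not_mem hj hp).symm hcj.symm hpc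
        - (g j c + g p j) * hanti p c hpc + g p c * hanti j c hcj.symm)
  linear_combination -hp_expand - hsum - g p c * hc_expand

theorem sumProdErase_eq_oddPowOrZero (hanti : ∀ i j, i ≠ j → g j i = -g i j)
    (hcyc : ∀ i j k, i ≠ j → j ≠ k → i ≠ k → g i j * g j k + g j k * g k i + g k i * g i j = e)
    (s : Finset ι) : sumProdErase g s = oddPowOrZero e s.card := by
  induction hn : s.card using Nat.strong_induction_on generalizing s with
  | _ n ih =>
  match n, hn with
  | 0, hn => simp [card_eq_zero.mp hn, sumProdErase, oddPowOrZero]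
  | 1, hn =>
    obtain ⟨a, rfl⟩ := card_eq_one.mp hn
    simp [sumProdErase, oddPowOrZero]
  | n + 2, hn =>
    obtain ⟨p, T, hpT, rfl, hT⟩ := card_eq_succ.mp hn
    obtain ⟨c, B, hcB, rfl, hB⟩ := card_eq_succ.mp hT
    have hpc : p ≠ c := fun h => hpT (h ▸ mem_insert_self c B)
    have hpB : p ∉ B := fun h => hpT (mem_insert_of_mem h)
    rw [sumProdErase_insert_insert hanti hcyc hpc hpB hcB,
      ih (n + 1) (by omega) (insert p B) (by rw [card_insert_of_notMem hpB, hB]),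
      ih (n + 1) (by omega) (insert c B) (by rw [card_insert_of_notMem hcB, hB]),
      ih n (by omega) B hB, sub_self, zero_mul, zero_sub, oddPowOrZero_add_two]

lemma sum_sum_powerset_eq_sum_sum_insert {M : Type*} [AddCommMonoid M]
    (s : Finset ι) (f : Finset ι → ι → M) :
    ∑ A ∈ s.powerset, ∑ i ∈ A, f A i = ∑ i ∈ s, ∑ t ∈ (s.erase i).powerset, f (insert i t) i := by
  rw [sum_sigma', sum_sigma']
  refine sum_nbij' (fun x => ⟨x.2, x.1.erase x.2⟩) (fun y => ⟨insert y.1 y.2, y.1⟩)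
    ?_ ?_ ?_ ?_ ?_ <;> simp only [mem_sigma, mem_powerset, and_imp, Sigma.forall]
  · exact fun A i hA hi => ⟨hA hi, erase_subset_erase i hA⟩
  · exact fun i t hi ht => ⟨insert_subset hi (ht.trans (erase_subset i s)), mem_insert_self i t⟩
  · exact fun A i _ hi => by simp [insert_erase hi]
  · exact fun i t _ ht => by simp [erase_insert fun h => notMem_erase i s (ht h)]
  · exact fun A i _ hi => by simp [insert_erase hi]

theorem sum_prod_erase_add_eq (g : ι → ι → K) (c : K) (s : Finset ι) :
    ∑ i ∈ s, ∏ j ∈ s.erase i, (g i j + c) =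
      ∑ A ∈ s.powerset, sumProdErase g A * c ^ (s.card - A.card) := by
  simp only [sumProdErase, sum_mul, sum_sum_powerset_eq_sum_sum_insert, prod_add, prod_const]
  refine sum_congr rfl fun i hi => sum_congr rfl fun t ht => ?_
  have hit : i ∉ t := fun h => notMem_erase i s (mem_powerset.mp ht h)
  rw [erase_insert hit, card_sdiff_of_subset (mem_powerset.mp ht), card_erase_of_mem hi,
    card_insert_of_notMem hit, Nat.sub_sub, add_comm 1]

end SumProdErase

lemma coeff_mul_zero_of_coeff_eq_zero {S : Type*} [Semiring S] {x y : LaurentSeries S}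
    (hx : ∀ k ≤ 0, k ≠ -1 → x.coeff k = 0) (hy : ∀ k ≤ 0, k ≠ -1 → y.coeff k = 0) :
    (x * y).coeff 0 = x.coeff (-1) * y.coeff 1 + x.coeff 1 * y.coeff (-1) := by
  rw [coeff_mul, sum_eq_add (-1, 1) (1, -1) (by decide)]
  · rintro ⟨a, b⟩ hab hne
    obtain ⟨ha, hb, hsum⟩ := mem_antidiagonal.mp hab
    exfalso
    rcases le_total a 0 with h | h
    · exact ha (hx a h fun h' => hne.1 (by simp [h']; omega))
    · exact hb (hy b (by simp at hsum; omega) fun h' => hne.2 (by simp [h']; omega))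
  all_goals
    intro hnot
    by_contra h
    exact hnot (mem_antidiagonal.mpr ⟨left_ne_zero_of_mul h, right_ne_zero_of_mul h, by norm_num⟩)

@[simp]
lemma coeff_zscale (w : R) (f : LaurentSeries R) (k : ℤ) :
    (zscale w f).coeff k = w ^ k * f.coeff k := rfl

lemma coeff_FH_natCast_sub_one (H : PowerSeries R) (n : ℕ) :
    (FH H).coeff (n - 1) = PowerSeries.coeff n H := by
  rw [FH, sub_eq_add_neg, coeff_single_mul_add, one_mul, ofPowerSeries_apply_coeff]

lemma coeff_FH_of_lt (H : PowerSeries R) {k : ℤ} (hk : k < -1) : (FH H).coeff k = 0 := by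
  rw [FH, show k = (k + 1) + -1 by ring, coeff_single_mul_add, one_mul, ofPowerSeries_apply,
    embDomain_of_notMem_range]
  rintro ⟨m, hm⟩
  change (m : ℤ) = k + 1 at hm
  omega

def reducedFH (H : PowerSeries R) (u : ℤ) : LaurentSeries R :=
  zscale (u : R) (FH H) - C (PowerSeries.coeff 1 H)

section reducedFH

variable (H : PowerSeries R) (u : ℤ)

lemma coeff_reducedFH_of_ne_zero {k : ℤ} (hk : k ≠ 0) :
    (reducedFH H u).coeff k = (u : R) ^ k * (FH H).coeff k := by
  rw [reducedFH, coeff_sub, C_apply, coeff_single_of_ne hk, sub_zero, coeff_zscale]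

lemma coeff_reducedFH_zero : (reducedFH H u).coeff 0 = 0 := by
  rw [reducedFH, coeff_sub, C_apply, coeff_single_same, sub_eq_zero, coeff_zscale, zpow_zero,
    one_mul]
  simpa using coeff_FH_natCast_sub_one H 1

lemma coeff_reducedFH_eq_zero_of_nonpos (k : ℤ) (hk : k ≤ 0) (hk' : k ≠ -1) :
    (reducedFH H u).coeff k = 0 := by
  rcases hk.lt_or_eq with hk | rfl
  · rw [coeff_reducedFH_of_ne_zero H u hk.ne, coeff_FH_of_lt H (by omega), mul_zero]
  · exact coeff_reducedFH_zero H u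

lemma coeff_reducedFH_neg_one (hH : PowerSeries.constantCoeff H = 1) :
    (reducedFH H u).coeff (-1) = (u : R)⁻¹ := by
  have h := coeff_FH_natCast_sub_one H 0
  rw [Nat.cast_zero, zero_sub, PowerSeries.coeff_zero_eq_constantCoeff, hH] at h
  rw [coeff_reducedFH_of_ne_zero H u (by norm_num), h, mul_one, zpow_neg_one]

lemma coeff_reducedFH_one : (reducedFH H u).coeff 1 = u * PowerSeries.coeff 2 H := by
  have h := coeff_FH_natCast_sub_one H 2
  norm_num at h
  rw [coeff_reducedFH_of_ne_zero H u one_ne_zero, zpow_one, h]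

lemma coeff_zero_reducedFH_mul (hH : PowerSeries.constantCoeff H = 1) (v : ℤ) :
    (reducedFH H u * reducedFH H v).coeff 0 =
      PowerSeries.coeff 2 H * ((v : R) / u + (u : R) / v) := by
  rw [coeff_mul_zero_of_coeff_eq_zero (coeff_reducedFH_eq_zero_of_nonpos H u)
      (coeff_reducedFH_eq_zero_of_nonpos H v), coeff_reducedFH_neg_one H u hH,
    coeff_reducedFH_neg_one H v hH, coeff_reducedFH_one, coeff_reducedFH_one]
  ring

end reducedFH

lemma AlgRigid.mono {H : PowerSeries R} {m n : ℕ} (h : AlgRigid H n) (hmn : m ≤ n) :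
    AlgRigid H m :=
  fun k hk hkm => h k hk (hkm.trans hmn)

lemma SH_eq_sum_prod_reducedFH (H : PowerSeries R) {n : ℕ} (w : Fin (n + 1) → ℤ) :
    SH H w = ∑ i, ∏ j ∈ univ.erase i, (reducedFH H (w j - w i) + C (PowerSeries.coeff 1 H)) := by
  simp only [SH, reducedFH, sub_add_cancel]

lemma reducedFH_neg {H : PowerSeries R} (hrig : AlgRigid H 1) {u : ℤ} (hu : u ≠ 0) :
    reducedFH H (-u) = -reducedFH H u := by
  have hw : Function.Injective ![0, u] := by
    intro i j hij
    fin_cases i <;> fin_cases j <;> simp_all [eq_comm]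
  have hS := SH_eq_sum_prod_reducedFH H ![0, u]
  rw [Fin.sum_univ_two, show univ.erase (0 : Fin 2) = {1} by decide,
    show univ.erase (1 : Fin 2) = {0} by decide, prod_singleton, prod_singleton] at hS
  simp only [Matrix.cons_val_zero, Matrix.cons_val_one, sub_zero, zero_sub] at hS
  rw [eq_neg_iff_add_eq_zero]
  ext k
  rcases eq_or_ne k 0 with rfl | hk
  · simp only [coeff_add, coeff_reducedFH_zero, add_zero, coeff_zero]
  · have h := hrig 1 le_rfl le_rfl _ hw k hk
    simp only [hS, coeff_add, C_apply, coeff_single_of_ne hk, add_zero] at h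
    rw [coeff_add, coeff_zero, add_comm, h]

lemma div_add_div_cyclic_of_add_eq_zero {K : Type*} [Field K] {x y z : K} (hx : x ≠ 0)
    (hy : y ≠ 0) (hz : z ≠ 0) (h : x + y + z = 0) :
    y / x + x / y + (z / y + y / z) + (x / z + z / x) = -3 := by
  rw [show z = -x - y by linear_combination h] at hz ⊢
  field_simp
  ring

lemma reducedFH_cyclic [CharZero R] {H : PowerSeries R} (hH : PowerSeries.constantCoeff H = 1)
    (hrig : AlgRigid H 2) {a b c : ℤ} (hab : a ≠ b) (hbc : b ≠ c) (hac : a ≠ c) :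
    reducedFH H (b - a) * reducedFH H (c - b) + reducedFH H (c - b) * reducedFH H (a - c) +
      reducedFH H (a - c) * reducedFH H (b - a) = C (-3 * PowerSeries.coeff 2 H) := by
  have hw : Function.Injective ![a, b, c] := by
    intro i j hij
    fin_cases i <;> fin_cases j <;> simp_all [eq_comm]
  have hS := SH_eq_sum_prod_reducedFH H ![a, b, c]
  rw [Fin.sum_univ_three, show univ.erase (0 : Fin 3) = {1, 2} by decide,
    show univ.erase (1 : Fin 3) = {0, 2} by decide, show univ.erase (2 : Fin 3) = {0, 1} by decide,
    prod_pair (by decide), prod_pair (by decide), prod_pair (by decide)] at hS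
  simp only [Matrix.cons_val_zero, Matrix.cons_val_one, Matrix.cons_val_two,
    Matrix.head_cons, Matrix.tail_cons] at hS
  have hrig1 := hrig.mono one_le_two
  rw [show c - a = -(a - c) by ring, show a - b = -(b - a) by ring,
    show b - c = -(c - b) by ring, reducedFH_neg hrig1 (sub_ne_zero.mpr hac),
    reducedFH_neg hrig1 (sub_ne_zero.mpr hab.symm),
    reducedFH_neg hrig1 (sub_ne_zero.mpr hbc.symm)] at hS
  have hC : (C (3 * PowerSeries.coeff 1 H ^ 2) : LaurentSeries R) =
      3 * C (PowerSeries.coeff 1 H) ^ 2 := by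
    rw [map_mul, map_pow, map_ofNat]
  have hexpand : reducedFH H (b - a) * reducedFH H (c - b) +
      reducedFH H (c - b) * reducedFH H (a - c) + reducedFH H (a - c) * reducedFH H (b - a) =
      C (3 * PowerSeries.coeff 1 H ^ 2) - SH H ![a, b, c] := by
    linear_combination hS - hC
  ext k
  rcases eq_or_ne k 0 with rfl | hk
  · rw [coeff_add, coeff_add, coeff_zero_reducedFH_mul H _ hH, coeff_zero_reducedFH_mul H _ hH,
      coeff_zero_reducedFH_mul H _ hH, C_apply, coeff_single_same]
    have hsum : ((b - a : ℤ) : R) + (c - b : ℤ) + (a - c : ℤ) = 0 := by push_cast; ring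
    have hne {x y : ℤ} (h : x ≠ y) : ((y - x : ℤ) : R) ≠ 0 := by
      exact_mod_cast sub_ne_zero.mpr h.symm
    linear_combination PowerSeries.coeff 2 H *
      div_add_div_cyclic_of_add_eq_zero (hne hab) (hne hbc) (hne hac.symm) hsum
  · rw [hexpand, coeff_sub, hrig 2 one_le_two le_rfl _ hw k hk, C_apply, C_apply,
      coeff_single_of_ne hk, coeff_single_of_ne hk, sub_zero]

theorem SH_eq_C [CharZero R] {H : PowerSeries R} (hH : PowerSeries.constantCoeff H = 1)
    (hrig : AlgRigid H 2) {n : ℕ} {w : Fin (n + 1) → ℤ} (hw : Function.Injective w) :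
    SH H w = C (∑ A ∈ (univ : Finset (Fin (n + 1))).powerset,
      oddPowOrZero (-3 * PowerSeries.coeff 2 H) A.card *
        PowerSeries.coeff 1 H ^ (n + 1 - A.card)) := by
  have hanti (i j) (hij : i ≠ j) : reducedFH H (w i - w j) = -reducedFH H (w j - w i) := by
    rw [← neg_sub, reducedFH_neg (hrig.mono one_le_two) (sub_ne_zero.mpr (hw.ne hij.symm))]
  have hcyc := fun i j k (hij : i ≠ j) (hjk : j ≠ k) (hik : i ≠ k) =>
    reducedFH_cyclic hH hrig (hw.ne hij) (hw.ne hjk) (hw.ne hik)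
  rw [SH_eq_sum_prod_reducedFH, sum_prod_erase_add_eq (fun i j => reducedFH H (w j - w i)),
    card_univ, Fintype.card_fin]
  simp only [sumProdErase_eq_oddPowOrZero hanti hcyc, map_sum, map_mul, map_pow, oddPowOrZero,
    apply_ite C, map_neg, map_zero]

/-- Corollary 4.2: if `H ∈ ℂ[[t]]` with constant term 1 is 2-algebraically
rigid, then it is strongly algebraically rigid, i.e. `AR² = AR³ = ⋯ = AR^∞`. -/
theorem algRigid_two_implies_strong (H : PowerSeries ℂ)
    (hH : PowerSeries.constantCoeff H = 1) (hrig : AlgRigid H 2) :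
    ∀ n : ℕ, AlgRigid H n := by
  intro n m _ _ w hw k hk
  rw [SH_eq_C hH hrig hw, C_apply, coeff_single_of_ne hk]

end RigidGenus
end
end
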